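/- arXiv:1608.00959 — 2 statements merged into one kernel-verified Lean document; each statement's English description precedes it below -/
import Mathlib

section
/- Let G be a linearly ordered group and let a, b, c, d be elements of G. For (x,y) ∈ G × G, the equation (a,b) = (a,c)·(x,y)·(d,b) holds in 𝓑(G) if and only if (c,d) ≼ (x,y) in the natural partial order of 𝓑(G). -/
/-!
Expanding `(a,c)·(x,y)` by the trichotomy of `c` and `x` and then multiplying by `(d,b)`, the
equation holds exactly when `c = x, y = d` or `x < c, c·x⁻¹·y = d`; the witness `(c,c)` shows this
is the natural order `(c,d) ≼ (x,y)`. The only other candidate, `c < x` with `y < d`, would force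
`d·y⁻¹ = c·x⁻¹`, impossible in a right-ordered group, where the left side exceeds `1` and the right one is below it.
-/

/-- The multiplication of the bicyclic extension `𝓑(G) = G × G` of a linearly ordered
group `G`: `(a,b)·(c,d) = (c·b⁻¹·a, d)` if `b < c`; `(a,d)` if `b = c`;
`(a, b·c⁻¹·d)` if `b > c`. -/
def bmul {G : Type*} [Group G] [LinearOrder G] (s t : G × G) : G × G :=
  if s.2 < t.1 then (t.1 * s.2⁻¹ * s.1, t.2)
  else if s.2 = t.1 then (s.1, t.2)
  else (s.1, s.2 * t.1⁻¹ * t.2)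

/-- The natural partial order on `𝓑(G)`: `s ≼ t` iff `s = e·t` for some idempotent
`e` of `𝓑(G)`; the idempotents of `𝓑(G)` are exactly the pairs `(x,x)`. -/
def ble {G : Type*} [Group G] [LinearOrder G] (s t : G × G) : Prop :=
  ∃ x : G, bmul (x, x) t = s

section Bicyclic

variable {G : Type*} [Group G] [LinearOrder G]

theorem bmul_of_lt {a b c : G} (d : G) (h : b < c) : bmul (a, b) (c, d) = (c * b⁻¹ * a, d) := by
  simp [bmul, h]

theorem bmul_of_eq (a b d : G) : bmul (a, b) (b, d) = (a, d) := by
  simp [bmul]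

theorem bmul_of_gt {a b c : G} (d : G) (h : c < b) : bmul (a, b) (c, d) = (a, b * c⁻¹ * d) := by
  simp [bmul, h.not_gt, h.ne']

theorem ble_iff (c d x y : G) : ble (c, d) (x, y) ↔ x ≤ c ∧ c * x⁻¹ * y = d := by
  constructor
  · rintro ⟨z, hz⟩
    rcases lt_trichotomy z x with hzx | rfl | hxz
    · rw [bmul_of_lt y hzx, inv_mul_cancel_right, Prod.mk.injEq] at hz
      obtain ⟨rfl, rfl⟩ := hz
      simp
    · rw [bmul_of_eq, Prod.mk.injEq] at hz
      obtain ⟨rfl, rfl⟩ := hz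
      simp
    · rw [bmul_of_gt y hxz, Prod.mk.injEq] at hz
      obtain ⟨rfl, rfl⟩ := hz
      exact ⟨hxz.le, rfl⟩
  · rintro ⟨hxc, rfl⟩
    refine ⟨c, ?_⟩
    rcases hxc.lt_or_eq with hxc | rfl
    · exact bmul_of_gt y hxc
    · simp [bmul_of_eq]

theorem eq_bmul_iff (a b d p q : G) :
    (a, b) = bmul (p, q) (d, b) ↔ q = d ∧ p = a ∨ q < d ∧ d * q⁻¹ * p = a := by
  rcases lt_trichotomy q d with hqd | rfl | hdq
  · simp [bmul_of_lt b hqd, hqd, hqd.ne, eq_comm]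
  · simp [bmul_of_eq, eq_comm]
  · simp [bmul_of_gt b hdq, hdq.ne', hdq.not_gt, mul_inv_eq_one]

theorem eq_bmul_iff_of_fst_eq (a b d q : G) : (a, b) = bmul (a, q) (d, b) ↔ q = d := by
  rw [eq_bmul_iff]
  constructor
  · rintro (⟨rfl, -⟩ | ⟨hqd, h⟩)
    · rfl
    · rw [mul_eq_right, mul_inv_eq_one] at h
      exact absurd h hqd.ne'
  · exact fun h => .inl ⟨h, rfl⟩

theorem mul_inv_ne_mul_inv_of_lt_of_lt [CovariantClass G G (Function.swap (· * ·)) (· ≤ ·)]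
    {c d x y : G} (hyd : y < d) (hcx : c < x) : d * y⁻¹ ≠ c * x⁻¹ :=
  ((inv_mul_lt_one_iff_lt.2 hcx).trans (lt_mul_inv_iff_lt.2 hyd)).ne'

end Bicyclic

theorem eq_middle_factor_iff_general {G : Type*} [Group G] [LinearOrder G]
    [CovariantClass G G (Function.swap (· * ·)) (· ≤ ·)]
    (a b c d : G) (x y : G) :
    (a, b) = bmul (bmul (a, c) (x, y)) (d, b) ↔ ble (c, d) (x, y) := by
  rw [ble_iff]
  rcases lt_trichotomy c x with hcx | rfl | hxc
  · rw [bmul_of_lt y hcx, eq_bmul_iff]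
    refine iff_of_false ?_ (fun h => hcx.not_ge h.1)
    rintro (⟨-, h⟩ | ⟨hyd, h⟩)
    · rw [mul_eq_right, mul_inv_eq_one] at h
      exact hcx.ne' h
    · rw [← mul_assoc, mul_eq_right, mul_eq_one_iff_eq_inv, mul_inv_rev, inv_inv] at h
      exact mul_inv_ne_mul_inv_of_lt_of_lt hyd hcx h
  · rw [bmul_of_eq, eq_bmul_iff_of_fst_eq]
    simp
  · rw [bmul_of_gt y hxc, eq_bmul_iff_of_fst_eq]
    simp [hxc.le]

/-- Proposition 2.2(iii): `(a,b) = (a,c)·(x,y)·(d,b)` in `𝓑(G)` iff `(c,d) ≼ (x,y)`. -/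
theorem eq_middle_factor_iff {G : Type*} [Group G] [LinearOrder G]
    [CovariantClass G G (· * ·) (· ≤ ·)]
    [CovariantClass G G (Function.swap (· * ·)) (· ≤ ·)]
    (a b c d : G) (x y : G) :
    (a, b) = bmul (bmul (a, c) (x, y)) (d, b) ↔ ble (c, d) (x, y) :=
  eq_middle_factor_iff_general a b c d x y
end

section
/- Let G be a linearly ordered group and let τ be a topology on 𝓑(G) such that for every s ∈ 𝓑(G) the left translation x ↦ s·x and the right translation x ↦ x·s are continuous. If the space (𝓑(G), τ) contains an isolated point, then (𝓑(G), τ) is discrete. -/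
/-!
Fix an isolated point `p` and any `q`. Choose `b < q.1` and `c < q.2` (a nontrivial linearly
ordered group has no least element) and put `s = (b q.1⁻¹ p.1, b)`, `t = (c, c q.2⁻¹ p.2)`, so
that `s·q·t = p`. If `x·t = y` with `y.2 ≠ t.2`, then `t.1 < x.2` and `x` is determined by `y`;
dually, `s·x = y` with `y.1 ≠ s.1` determines `x`. As `p.2 ≠ t.2` and `p.1 ≠ s.1`, the fibre of
the continuous map `x ↦ s·x·t` over `p` is `{q}`, which is therefore open.
-/

section Bicyclic

variable {G : Type*} [Group G] [LinearOrder G]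

lemma bmul_of_lt_s13 {s t : G × G} (h : s.2 < t.1) : bmul s t = (t.1 * s.2⁻¹ * s.1, t.2) :=
  if_pos h

lemma bmul_of_gt_s13 {s t : G × G} (h : t.1 < s.2) : bmul s t = (s.1, s.2 * t.1⁻¹ * t.2) := by
  rw [bmul, if_neg h.asymm, if_neg h.ne']

lemma fst_bmul_of_le {s t : G × G} (h : t.1 ≤ s.2) : (bmul s t).1 = s.1 := by
  unfold bmul
  split_ifs with h₁ <;> first | rfl | exact absurd h₁ h.not_gt

lemma snd_bmul_of_le {s t : G × G} (h : s.2 ≤ t.1) : (bmul s t).2 = t.2 := by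
  unfold bmul
  split_ifs with h₁ h₂ <;> first | rfl | exact absurd (lt_of_le_of_ne h h₂) h₁

lemma eq_of_bmul_left_eq {s x y : G × G} (h : bmul s x = y) (hy : y.1 ≠ s.1) :
    x = (y.1 * s.1⁻¹ * s.2, y.2) := by
  have hlt : s.2 < x.1 := lt_of_not_ge fun hle => hy (h ▸ fst_bmul_of_le hle)
  rw [bmul_of_lt_s13 hlt] at h
  subst h
  ext <;> simp

lemma eq_of_bmul_right_eq {x t y : G × G} (h : bmul x t = y) (hy : y.2 ≠ t.2) :
    x = (y.1, y.2 * t.2⁻¹ * t.1) := by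
  have hlt : t.1 < x.2 := lt_of_not_ge fun hle => hy (h ▸ snd_bmul_of_le hle)
  rw [bmul_of_gt_s13 hlt] at h
  subst h
  ext <;> simp

theorem preimage_bmul_bmul_singleton {p q : G × G} {b c : G} (hb : b < q.1) (hc : c < q.2) :
    (fun x => bmul (bmul (b * q.1⁻¹ * p.1, b) x) (c, c * q.2⁻¹ * p.2)) ⁻¹' {p} = {q} := by
  ext x
  simp only [Set.mem_preimage, Set.mem_singleton_iff]
  constructor
  · intro h
    have hmid : bmul (b * q.1⁻¹ * p.1, b) x = (p.1, q.2) := by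
      refine (eq_of_bmul_right_eq h fun he => hc.ne ?_).trans (by ext <;> simp)
      simpa [mul_inv_eq_one] using he.symm
    refine (eq_of_bmul_left_eq hmid fun he => hb.ne ?_).trans (by ext <;> simp)
    simpa [mul_inv_eq_one] using he.symm
  · rintro rfl
    have hmid : bmul (b * x.1⁻¹ * p.1, b) x = (p.1, x.2) := by
      rw [bmul_of_lt_s13 hb]
      ext <;> simp [mul_assoc]
    rw [hmid, bmul_of_gt_s13 hc]
    ext <;> simp [mul_assoc]

end Bicyclic

theorem MulRightMono.noMinOrder {G : Type*} [Group G] [LinearOrder G] [MulRightMono G]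
    [Nontrivial G] : NoMinOrder G := by
  obtain ⟨g, hg⟩ : ∃ g : G, g < 1 := by
    obtain ⟨y, hy⟩ := exists_ne (1 : G)
    rcases hy.lt_or_gt with h | h
    · exact ⟨y, h⟩
    · exact ⟨y⁻¹, Right.inv_lt_one_iff.mpr h⟩
  exact ⟨fun a => ⟨g * a, mul_lt_of_lt_one_left' a hg⟩⟩

theorem isolated_point_implies_discrete_general {G : Type*} [Group G] [LinearOrder G]
    [CovariantClass G G (Function.swap (· * ·)) (· ≤ ·)]
    [TopologicalSpace (G × G)]
    (hl : ∀ s : G × G, Continuous fun x : G × G => bmul s x)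
    (hr : ∀ s : G × G, Continuous fun x : G × G => bmul x s)
    (p : G × G) (hp : IsOpen {p}) :
    DiscreteTopology (G × G) := by
  rcases subsingleton_or_nontrivial G with hG | hG
  · exact Subsingleton.discreteTopology
  have := MulRightMono.noMinOrder (G := G)
  refine discreteTopology_iff_isOpen_singleton.mpr fun q => ?_
  obtain ⟨b, hb⟩ := exists_lt q.1
  obtain ⟨c, hc⟩ := exists_lt q.2
  rw [← preimage_bmul_bmul_singleton (p := p) hb hc]
  exact hp.preimage ((hr _).comp (hl _))

/-- Lemma 3.1 for `𝓑(G)`: if a topology on `𝓑(G)` with separately continuous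
multiplication has an isolated point, then it is discrete. -/
theorem isolated_point_implies_discrete {G : Type*} [Group G] [LinearOrder G]
    [CovariantClass G G (· * ·) (· ≤ ·)]
    [CovariantClass G G (Function.swap (· * ·)) (· ≤ ·)]
    [TopologicalSpace (G × G)]
    (hl : ∀ s : G × G, Continuous fun x : G × G => bmul s x)
    (hr : ∀ s : G × G, Continuous fun x : G × G => bmul x s)
    (p : G × G) (hp : IsOpen {p}) :
    DiscreteTopology (G × G) :=
  isolated_point_implies_discrete_general hl hr p hp
end
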